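/- Let f : X → (-∞,+∞] be a c-antiderivative of a multivalued mapping M : X ⇉ Y and take S = dom(M). Then the pointwise supremum of the family 𝒜_{[c,f|_{dom(M)},M]} satisfies γ_{[c,f|_{dom(M)},M]} = (f + ι_{dom(M)})^{cc}, where ι_{dom(M)} is the indicator function of dom(M) (equal to 0 on dom(M) and +∞ off it) and f^{cc} := (f^c)^c is the c-convexification. -/

import Mathlib

noncomputable section

open scoped Classical

variable {X Y : Type*}

/-- The `c`-transform of `f : X → EReal`, a function on `Y`:
`f^c(y) = sup_{x ∈ X} (c(x,y) - f(x))`. The `c`-transform of a function on `Y` is obtained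
by applying this to the swapped coupling `fun y x => c x y`. -/
def cTransform (c : X → Y → ℝ) (f : X → EReal) : Y → EReal :=
  fun y => ⨆ x, ((c x y : EReal) - f x)

/-- `f` is proper: it takes no value `-∞` (i.e. maps into `(-∞, +∞]`) and is finite somewhere. -/
def ProperFn (f : X → EReal) : Prop :=
  (∀ x, f x ≠ ⊥) ∧ ∃ x, f x ≠ ⊤

/-- `f` is `c`-convex: it is proper and is the `c`-transform of some proper
`g : Y → (-∞, +∞]`. -/
def IsCConvex (c : X → Y → ℝ) (f : X → EReal) : Prop :=
  ProperFn f ∧ ∃ g : Y → EReal, ProperFn g ∧ f = cTransform (fun y x => c x y) g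

/-- The `c`-subdifferential of `f`:
`∂_c f(x) = { y | ∀ x', f(x) + c(x',y) ≤ f(x') + c(x,y) }`. -/
def cSubdiff (c : X → Y → ℝ) (f : X → EReal) (x : X) : Set Y :=
  { y | ∀ x', f x + (c x' y : EReal) ≤ f x' + (c x y : EReal) }

/-- The domain of a multivalued mapping `M : X ⇉ Y`. -/
def mapDom (M : X → Set Y) : Set X := { x | (M x).Nonempty }

/-- The inverse multivalued mapping `M⁻¹ : Y ⇉ X`. -/
def mapInv (M : X → Set Y) : Y → Set X := fun y => { x | y ∈ M x }

/-- The image `M(S) = ⋃_{s ∈ S} M(s)` of a set `S` under a multivalued mapping. -/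
def mapImageOn (M : X → Set Y) (S : Set X) : Set Y := { y | ∃ s ∈ S, y ∈ M s }

/-- The image `Im(M) = ⋃_{x ∈ X} M(x)` of a multivalued mapping. -/
def mapIm (M : X → Set Y) : Set Y := { y | ∃ x, y ∈ M x }

/-- `f` is a `c`-antiderivative of `M`: `f` is proper and `G(M) ⊆ G(∂_c f)`. -/
def IsCAntiderivative (c : X → Y → ℝ) (f : X → EReal) (M : X → Set Y) : Prop :=
  ProperFn f ∧ ∀ x y, y ∈ M x → y ∈ cSubdiff c f x

/-- The family `𝒜_{[c, f|_S, M]}` of all `c`-convex `c`-antiderivatives of `M`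
which coincide with `f` on `S`. -/
def cFamily (c : X → Y → ℝ) (f : X → EReal) (S : Set X) (M : X → Set Y) :
    Set (X → EReal) :=
  { h | IsCConvex c h ∧ (∀ x y, y ∈ M x → y ∈ cSubdiff c h x) ∧ ∀ s ∈ S, h s = f s }

/-- The upper envelope `γ_{[c, f|_S, M]}`. -/
def upperEnv (c : X → Y → ℝ) (f : X → EReal) (S : Set X) (M : X → Set Y) : X → EReal :=
  fun x => ⨆ h ∈ cFamily c f S M, h x

/-- The lower envelope `α_{[c, f|_S, M]}`. -/
def lowerEnv (c : X → Y → ℝ) (f : X → EReal) (S : Set X) (M : X → Set Y) : X → EReal :=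
  fun x => ⨅ h ∈ cFamily c f S M, h x

/-- The indicator function `ι_A` (0 on `A`, `+∞` off `A`). -/
def indicatorE (A : Set X) : X → EReal := fun x => if x ∈ A then 0 else ⊤

/-- Rockafellar's function `R_{[c,M,s]}`: the supremum over `n ≥ 1` and chains
`x_1 = s`, `x_{n+1} = x`, `{(x_i, y_i)}_{i=1}^n ⊆ G(M)` of
`Σ_{i=1}^n [c(x_{i+1}, y_i) - c(x_i, y_i)]` (0-indexed below). -/
def rockafellar (c : X → Y → ℝ) (M : X → Set Y) (s : X) : X → EReal := fun x =>
  ⨆ (n : ℕ) (_ : 0 < n) (xs : ℕ → X) (ys : ℕ → Y)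
      (_ : xs 0 = s ∧ ∀ i < n, ys i ∈ M (xs i)),
    (((∑ i ∈ Finset.range n,
        (c (if i + 1 < n then xs (i + 1) else x) (ys i) - c (xs i) (ys i))) : ℝ) : EReal)

/-- `M` is cyclically monotone of order `n` with respect to `c`: for any `n` pairs
`{(x_i, y_i)}_{i=1}^n ⊆ G(M)`, setting `x_{n+1} = x_1`,
`0 ≤ Σ_{i=1}^n [c(x_i,y_i) - c(x_{i+1},y_i)]` (0-indexed below, cyclically). -/
def IsNCMonotone (c : X → Y → ℝ) (M : X → Set Y) (n : ℕ) : Prop :=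
  ∀ (xs : ℕ → X) (ys : ℕ → Y), (∀ i < n, ys i ∈ M (xs i)) →
    0 ≤ ∑ i ∈ Finset.range n, (c (xs i) (ys i) - c (xs ((i + 1) % n)) (ys i))

/-- `M` is `c`-cyclically monotone: `n`-`c`-monotone for all `n`. -/
def IsCCyclicallyMonotone (c : X → Y → ℝ) (M : X → Set Y) : Prop :=
  ∀ n : ℕ, IsNCMonotone c M n


/-! The upper envelope is a supremum of `c`-convex functions `h`, each equal to `h^{cc}`; since
`h = f` on `dom M` and `h ≤ +∞` elsewhere, `h ≤ φ := f + ι_{dom M}` and hence `h ≤ φ^{cc}`.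
Conversely `φ` is again a `c`-antiderivative of `M`, and for `y ∈ M x` the Fenchel–Young
equality `φ^c(y) = c(x,y) - φ(x)` holds. It forces `φ^{cc}(x) = φ(x)` and
`φ^{cc}(x') ≥ c(x',y) - φ^c(y)`, so `φ^{cc}` itself belongs to the family. -/

lemma EReal.coe_sub_sub_cancel (r : ℝ) (a : EReal) : (r : EReal) - (r - a) = a := by
  induction a using EReal.rec with
  | bot => simp [EReal.sub_top]
  | coe x => rw [← EReal.coe_sub, ← EReal.coe_sub]; norm_num
  | top => simp [EReal.sub_top]

section CTransform

variable {c : X → Y → ℝ} {f : X → EReal} {x : X}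

lemma sub_le_cTransform (c : X → Y → ℝ) (f : X → EReal) (x : X) (y : Y) :
    (c x y : EReal) - f x ≤ cTransform c f y :=
  le_iSup (fun x => (c x y : EReal) - f x) x

lemma cTransform_antitone (c : X → Y → ℝ) : Antitone (cTransform c) :=
  fun _ _ h _ => iSup_mono fun x => EReal.sub_le_sub le_rfl (h x)

lemma cTransform_ne_bot (hx : f x ≠ ⊤) (y : Y) : cTransform c f y ≠ ⊥ := by
  refine ne_bot_of_le_ne_bot ?_ (sub_le_cTransform c f x y)
  rw [sub_eq_add_neg, Ne, EReal.add_eq_bot_iff, EReal.neg_eq_bot_iff]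
  simpa using hx

lemma cTransform_cTransform_le (c : X → Y → ℝ) (f : X → EReal) :
    cTransform (fun y x => c x y) (cTransform c f) ≤ f := fun x =>
  iSup_le fun y => calc
    (c x y : EReal) - cTransform c f y ≤ (c x y : EReal) - ((c x y : EReal) - f x) :=
      EReal.sub_le_sub le_rfl (sub_le_cTransform c f x y)
    _ = f x := EReal.coe_sub_sub_cancel _ _

lemma IsCConvex.cTransform_cTransform {h : X → EReal} (hh : IsCConvex c h) :
    cTransform (fun y x => c x y) (cTransform c h) = h := by
  obtain ⟨-, g, -, rfl⟩ := hh
  refine le_antisymm (cTransform_cTransform_le _ _) ?_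
  exact cTransform_antitone _ (cTransform_cTransform_le _ g)

end CTransform

section FenchelYoung

variable {c : X → Y → ℝ} {f : X → EReal} {x : X} {y : Y}

lemma cTransform_eq_of_mem_cSubdiff (hy : y ∈ cSubdiff c f x) :
    cTransform c f y = c x y - f x := by
  refine le_antisymm (iSup_le fun x' => ?_) (sub_le_cTransform c f x y)
  have h := hy x'
  generalize f x = a at h ⊢
  generalize f x' = b at h ⊢
  induction a using EReal.rec <;> induction b using EReal.rec <;>
    simp_all [EReal.sub_top, ← EReal.coe_add, ← EReal.coe_sub]
  linarith

lemma cTransform_cTransform_eq_of_mem_cSubdiff (hy : y ∈ cSubdiff c f x) :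
    cTransform (fun y x => c x y) (cTransform c f) x = f x := by
  refine le_antisymm (cTransform_cTransform_le c f x) ?_
  have h := sub_le_cTransform (fun y x => c x y) (cTransform c f) y x
  rwa [cTransform_eq_of_mem_cSubdiff hy, EReal.coe_sub_sub_cancel] at h

lemma mem_cSubdiff_cTransform_cTransform (hy : y ∈ cSubdiff c f x) :
    y ∈ cSubdiff c (cTransform (fun y x => c x y) (cTransform c f)) x := by
  intro x'
  have h := sub_le_cTransform (fun y x => c x y) (cTransform c f) y x'
  rw [cTransform_eq_of_mem_cSubdiff hy] at h
  rw [cTransform_cTransform_eq_of_mem_cSubdiff hy]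
  refine le_trans ?_ (add_le_add_left h _)
  generalize f x = a
  induction a using EReal.rec <;> simp [EReal.sub_top, ← EReal.coe_add, ← EReal.coe_sub]
  linarith

lemma ne_top_of_mem_cSubdiff {x₀ : X} (hx₀ : f x₀ ≠ ⊤) (hy : y ∈ cSubdiff c f x) :
    f x ≠ ⊤ := by
  intro hx
  have h := hy x₀
  rw [hx, EReal.top_add_coe, top_le_iff] at h
  exact (EReal.add_lt_top hx₀ (EReal.coe_ne_top _)).ne h

end FenchelYoung

lemma indicatorE_nonneg (A : Set X) (x : X) : 0 ≤ indicatorE A x := by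
  unfold indicatorE; split_ifs <;> simp

lemma indicatorE_of_mem {A : Set X} {x : X} (hx : x ∈ A) : indicatorE A x = 0 := if_pos hx

lemma indicatorE_of_notMem {A : Set X} {x : X} (hx : x ∉ A) : indicatorE A x = ⊤ := if_neg hx

section Antiderivative

variable {c : X → Y → ℝ} {f : X → EReal} {M : X → Set Y}

lemma IsCAntiderivative.ne_top (hf : IsCAntiderivative c f M) {x : X} (hx : x ∈ mapDom M) :
    f x ≠ ⊤ :=
  let ⟨y, hy⟩ := hx
  let ⟨_, _, hx₀⟩ := hf.1
  ne_top_of_mem_cSubdiff hx₀ (hf.2 x y hy)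

lemma IsCAntiderivative.add_indicatorE (hf : IsCAntiderivative c f M)
    (hdom : (mapDom M).Nonempty) :
    IsCAntiderivative c (fun x => f x + indicatorE (mapDom M) x) M := by
  obtain ⟨s, hs⟩ := hdom
  refine ⟨⟨fun x => ?_, s, ?_⟩, fun x y hy x' => ?_⟩ <;> dsimp only
  · exact EReal.add_ne_bot_iff.2
      ⟨hf.1.1 x, ne_bot_of_le_ne_bot EReal.zero_ne_bot (indicatorE_nonneg _ x)⟩
  · rw [indicatorE_of_mem hs, add_zero]
    exact hf.ne_top hs
  · rw [indicatorE_of_mem (A := mapDom M) ⟨y, hy⟩, add_zero]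
    exact (hf.2 x y hy x').trans
      (add_le_add_left (le_add_of_nonneg_right (indicatorE_nonneg _ x')) _)

lemma IsCAntiderivative.cTransform_cTransform_mem_cFamily (hf : IsCAntiderivative c f M)
    (hdom : (mapDom M).Nonempty) :
    cTransform (fun y x => c x y) (cTransform c f) ∈ cFamily c f (mapDom M) M := by
  obtain ⟨s, y₀, hy₀⟩ := hdom
  have hs : f s ≠ ⊤ := hf.ne_top ⟨y₀, hy₀⟩
  have hsy₀ : y₀ ∈ cSubdiff c f s := hf.2 s y₀ hy₀
  have hy₀_ne_top : cTransform c f y₀ ≠ ⊤ := by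
    rw [cTransform_eq_of_mem_cSubdiff hsy₀, sub_eq_add_neg]
    exact (EReal.add_lt_top (EReal.coe_ne_top _) (by simpa using hf.1.1 s)).ne
  refine ⟨⟨⟨cTransform_ne_bot hy₀_ne_top, s, ?_⟩, cTransform c f,
      ⟨cTransform_ne_bot hs, y₀, hy₀_ne_top⟩, rfl⟩,
    fun x y hy => mem_cSubdiff_cTransform_cTransform (hf.2 x y hy),
    fun x ⟨y, hy⟩ => cTransform_cTransform_eq_of_mem_cSubdiff (hf.2 x y hy)⟩
  rwa [cTransform_cTransform_eq_of_mem_cSubdiff hsy₀]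

end Antiderivative

lemma IsCConvex.le_cTransform_cTransform {c : X → Y → ℝ} {h φ : X → EReal}
    (hh : IsCConvex c h) (hle : h ≤ φ) : h ≤ cTransform (fun y x => c x y) (cTransform c φ) :=
  hh.cTransform_cTransform.symm.le.trans
    (cTransform_antitone _ (cTransform_antitone c hle))

lemma le_add_indicatorE_of_mem_cFamily {c : X → Y → ℝ} {f h : X → EReal} {S : Set X}
    {M : X → Set Y} (hf : ∀ x, f x ≠ ⊥) (hh : h ∈ cFamily c f S M) :
    h ≤ fun x => f x + indicatorE S x := by
  intro x
  dsimp only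
  by_cases hx : x ∈ S
  · rw [indicatorE_of_mem hx, add_zero, hh.2.2 x hx]
  · rw [indicatorE_of_notMem hx, EReal.add_top_of_ne_bot (hf x)]
    exact le_top

lemma cFamily_congr {c : X → Y → ℝ} {f g : X → EReal} {S : Set X} {M : X → Set Y}
    (hfg : ∀ s ∈ S, f s = g s) : cFamily c f S M = cFamily c g S M :=
  Set.ext fun _ => and_congr_right' <| and_congr_right' <|
    forall₂_congr fun s hs => by rw [hfg s hs]

theorem statement6_general (c : X → Y → ℝ) (f : X → EReal)
    (M : X → Set Y) (hf : IsCAntiderivative c f M)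
    (hdom : (mapDom M).Nonempty) :
    upperEnv c f (mapDom M) M =
      cTransform (fun y x => c x y)
        (cTransform c (fun x => f x + indicatorE (mapDom M) x)) := by
  have hmem := (hf.add_indicatorE hdom).cTransform_cTransform_mem_cFamily hdom
  rw [cFamily_congr fun s hs => by rw [indicatorE_of_mem hs, add_zero]] at hmem
  funext x
  refine le_antisymm (iSup₂_le fun h hh => ?_) (le_iSup₂ (f := fun h _ => h x) _ hmem)
  exact hh.1.le_cTransform_cTransform (le_add_indicatorE_of_mem_cFamily hf.1.1 hh) x

/-- In the case `S = dom M`, the upper envelope satisfies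
`γ_{[c, f|_{dom M}, M]} = (f + ι_{dom M})^{cc}`. -/
theorem statement6 [Nonempty X] [Nonempty Y] (c : X → Y → ℝ) (f : X → EReal)
    (M : X → Set Y) (hf : IsCAntiderivative c f M)
    (hdom : (mapDom M).Nonempty) :
    upperEnv c f (mapDom M) M =
      cTransform (fun y x => c x y)
        (cTransform c (fun x => f x + indicatorE (mapDom M) x)) :=
  statement6_general c f M hf hdom
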